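/- arXiv:2604.21865 — 2 statements merged into one kernel-verified Lean document; each statement's English description precedes it below -/
import Mathlib

section
/- Under the hierarchical model X | θ, σ² ~ N(θ, σ²), S² | σ² ~ σ²χ²_k/k, with prior (θ, σ²) ~ g and joint marginal density f(x, s²) = ∬ p(x, s² | θ, σ²) g(θ, σ²) dθ dσ², the posterior moment generating function of U = θ/σ² given (X, S²) = (x, s²) satisfies, for all t in a neighborhood of 0 with s² − (2tx + t²)/k > 0: E[exp(tθ/σ²) | x, s²] = (s² / (s² − (2tx + t²)/k))^{k/2−1} · f(x + t, s² − (2tx + t²)/k) / f(x, s²). -/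
/-!
Completing the square in `θ`: the tilt `exp (tθ/σ²)` turns the likelihood at `(x, s²)` into the
likelihood at `(x + t, s² - (2tx + t²)/k)`, up to the factor `(s²/s²')^{k/2-1}` coming from the
`s²`-power, which does not depend on `(θ, σ²)`. Integrating this pointwise identity against the
prior gives the marginal density at the shifted data.
-/

open Real MeasureTheory

/-- The normalizing constant `C_k = k^{k/2} / (√(2π) Γ(k/2) 2^{k/2})`. -/
noncomputable def Ck (k : ℝ) : ℝ :=
  k ^ (k / 2) / (Real.sqrt (2 * Real.pi) * Real.Gamma (k / 2) * 2 ^ (k / 2))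

/-- The joint likelihood `p(x, s² | θ, σ²)` of the heteroscedastic normal means model. -/
noncomputable def lik (k x s2 θ σ2 : ℝ) : ℝ :=
  Ck k * s2 ^ (k / 2 - 1) * σ2 ^ (-((k + 1) / 2)) *
    Real.exp (-(((x - θ) ^ 2 + k * s2) / (2 * σ2)))

/-- `∫∫ h(θ, σ²) p(x, s² | θ, σ²) g(θ, σ²) dθ dσ²`, integrating `σ²` over `(0, ∞)`. -/
noncomputable def postInt (k : ℝ) (g : ℝ → ℝ → ℝ) (x s2 : ℝ) (h : ℝ → ℝ → ℝ) : ℝ :=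
  ∫ θ : ℝ, ∫ σ2 in Set.Ioi (0 : ℝ), h θ σ2 * lik k x s2 θ σ2 * g θ σ2

/-- The joint marginal density `f(x, s²) = ∬ p(x, s² | θ, σ²) g(θ, σ²) dθ dσ²`. -/
noncomputable def marg (k : ℝ) (g : ℝ → ℝ → ℝ) (x s2 : ℝ) : ℝ :=
  postInt k g x s2 (fun _ _ => 1)

/-- The posterior expectation `E[h(θ, σ²) | x, s²]` under the posterior density
`p(x, s² | θ, σ²) g(θ, σ²) / f(x, s²)`. -/
noncomputable def postExp (k : ℝ) (g : ℝ → ℝ → ℝ) (x s2 : ℝ) (h : ℝ → ℝ → ℝ) : ℝ :=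
  postInt k g x s2 h / marg k g x s2

theorem tilt_exponent {k x s2 θ σ2 : ℝ} (t : ℝ) (hk : k ≠ 0) (hσ2 : σ2 ≠ 0) :
    t * θ / σ2 + -(((x - θ) ^ 2 + k * s2) / (2 * σ2)) =
      -(((x + t - θ) ^ 2 + k * (s2 - (2 * t * x + t ^ 2) / k)) / (2 * σ2)) := by
  field_simp
  ring

theorem exp_mul_lik {k x s2 s2' θ σ2 : ℝ} (t : ℝ) (hk : k ≠ 0) (hs2 : 0 ≤ s2)
    (hs2' : s2' = s2 - (2 * t * x + t ^ 2) / k) (hpos : 0 < s2') (hσ2 : σ2 ≠ 0) :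
    exp (t * θ / σ2) * lik k x s2 θ σ2 = (s2 / s2') ^ (k / 2 - 1) * lik k (x + t) s2' θ σ2 := by
  have hpow : s2 ^ (k / 2 - 1) = (s2 / s2') ^ (k / 2 - 1) * s2' ^ (k / 2 - 1) := by
    rw [div_rpow hs2 hpos.le, div_mul_cancel₀ _ (rpow_pos_of_pos hpos _).ne']
  have hexp : exp (-(((x + t - θ) ^ 2 + k * s2') / (2 * σ2))) =
      exp (t * θ / σ2) * exp (-(((x - θ) ^ 2 + k * s2) / (2 * σ2))) := by
    rw [← exp_add, tilt_exponent t hk hσ2, hs2']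
  simp only [lik, hpow, hexp]
  ring

theorem postInt_exp_tilt {k x s2 : ℝ} (g : ℝ → ℝ → ℝ) (t : ℝ) (hk : k ≠ 0) (hs2 : 0 ≤ s2)
    (hpos : 0 < s2 - (2 * t * x + t ^ 2) / k) :
    postInt k g x s2 (fun θ σ2 => exp (t * θ / σ2)) =
      (s2 / (s2 - (2 * t * x + t ^ 2) / k)) ^ (k / 2 - 1) *
        marg k g (x + t) (s2 - (2 * t * x + t ^ 2) / k) := by
  simp only [marg, postInt, ← integral_const_mul]
  refine integral_congr_ae (Filter.Eventually.of_forall fun θ => ?_)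
  refine setIntegral_congr_fun measurableSet_Ioi fun σ2 hσ2 => ?_
  simp only [exp_mul_lik t hk hs2 rfl hpos (ne_of_gt hσ2)]
  ring

theorem posterior_mgf_U_general (k : ℝ) (hk : 0 < k) (g : ℝ → ℝ → ℝ)
    (x s2 : ℝ) (hs2 : 0 < s2) :
    ∀ t : ℝ, 0 < s2 - (2 * t * x + t ^ 2) / k →
      postExp k g x s2 (fun θ σ2 => Real.exp (t * θ / σ2)) =
        (s2 / (s2 - (2 * t * x + t ^ 2) / k)) ^ (k / 2 - 1) *
          marg k g (x + t) (s2 - (2 * t * x + t ^ 2) / k) / marg k g x s2 := by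
  intro t ht
  rw [postExp, postInt_exp_tilt g t hk.ne' hs2.le ht, mul_div_assoc]

/-- the posterior MGF of `U = θ/σ²` given `(x, s²)` satisfies, for all `t`
in a neighborhood of `0` with `s² − (2tx + t²)/k > 0`,
`E[exp(tθ/σ²) | x, s²] = (s²/(s² − (2tx+t²)/k))^{k/2−1} f(x+t, s² − (2tx+t²)/k)/f(x, s²)`. -/
theorem posterior_mgf_U (k : ℝ) (hk : 0 < k) (g : ℝ → ℝ → ℝ)
    (hg : ∀ θ σ2, 0 ≤ g θ σ2)
    (hgint : ∫ θ : ℝ, ∫ σ2 in Set.Ioi (0 : ℝ), g θ σ2 = 1)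
    (x s2 : ℝ) (hs2 : 0 < s2) (hf : 0 < marg k g x s2)
    (hint : ∀ t : ℝ, Integrable
      (fun p : ℝ × ℝ => Real.exp (t * p.1 / p.2) * lik k x s2 p.1 p.2 * g p.1 p.2)
      ((volume : Measure ℝ).prod (volume.restrict (Set.Ioi 0)))) :
    ∀ t : ℝ, 0 < s2 - (2 * t * x + t ^ 2) / k →
      postExp k g x s2 (fun θ σ2 => Real.exp (t * θ / σ2)) =
        (s2 / (s2 - (2 * t * x + t ^ 2) / k)) ^ (k / 2 - 1) *
          marg k g (x + t) (s2 - (2 * t * x + t ^ 2) / k) / marg k g x s2 :=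
  posterior_mgf_U_general k hk g x s2 hs2
end

section
/- Under the hierarchical model X | θ, σ² ~ N(θ, σ²), S² | σ² ~ σ²χ²_k/k, with prior (θ, σ²) ~ g and joint marginal density f(x, s²), the posterior moment generating function of V = 1/σ² given (x, s²) satisfies, for all t in a neighborhood of 0 with s² − 2t/k > 0: E[exp(t/σ²) | x, s²] = (s² / (s² − 2t/k))^{k/2−1} · f(x, s² − 2t/k) / f(x, s²). -/
open Real MeasureTheory

/-- Since `t / σ² = k (2t/k) / (2σ²)`, the tilt `exp (t / σ²)` is absorbed by the factor
`exp (-k s² / (2σ²))` of the likelihood. -/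
theorem exp_div_mul_lik {k x s2 t : ℝ} (hk : k ≠ 0) (hs2 : 0 ≤ s2) (ht : 0 < s2 - 2 * t / k)
    (θ σ2 : ℝ) :
    exp (t / σ2) * lik k x s2 θ σ2 =
      (s2 / (s2 - 2 * t / k)) ^ (k / 2 - 1) * lik k x (s2 - 2 * t / k) θ σ2 := by
  have hpow : (s2 / (s2 - 2 * t / k)) ^ (k / 2 - 1) * (s2 - 2 * t / k) ^ (k / 2 - 1) =
      s2 ^ (k / 2 - 1) := by
    rw [← mul_rpow (div_nonneg hs2 ht.le) ht.le, div_mul_cancel₀ _ ht.ne']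
  have hexp : exp (t / σ2) * exp (-(((x - θ) ^ 2 + k * s2) / (2 * σ2))) =
      exp (-(((x - θ) ^ 2 + k * (s2 - 2 * t / k)) / (2 * σ2))) := by
    rw [← exp_add]
    rcases eq_or_ne σ2 0 with rfl | hσ2
    · simp
    · congr 1
      field_simp
      ring
  simp only [lik]
  rw [← hpow, ← hexp]
  ring

theorem postInt_exp_div {k s2 t : ℝ} (hk : k ≠ 0) (hs2 : 0 ≤ s2) (ht : 0 < s2 - 2 * t / k)
    (g : ℝ → ℝ → ℝ) (x : ℝ) :
    postInt k g x s2 (fun _ σ2 => exp (t / σ2)) =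
      (s2 / (s2 - 2 * t / k)) ^ (k / 2 - 1) * marg k g x (s2 - 2 * t / k) := by
  simp only [marg, postInt, exp_div_mul_lik hk hs2 ht, one_mul, mul_assoc, integral_const_mul]

theorem posterior_mgf_V_general (k : ℝ) (hk : 0 < k) (g : ℝ → ℝ → ℝ)
    (x s2 : ℝ) (hs2 : 0 < s2) :
    ∀ t : ℝ, 0 < s2 - 2 * t / k →
      postExp k g x s2 (fun _ σ2 => Real.exp (t / σ2)) =
        (s2 / (s2 - 2 * t / k)) ^ (k / 2 - 1) *
          marg k g x (s2 - 2 * t / k) / marg k g x s2 := by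
  intro t ht
  rw [postExp, postInt_exp_div hk.ne' hs2.le ht]

/-- the posterior MGF of `V = 1/σ²` given `(x, s²)` satisfies, for all `t`
in a neighborhood of `0` with `s² − 2t/k > 0`,
`E[exp(t/σ²) | x, s²] = (s²/(s² − 2t/k))^{k/2−1} f(x, s² − 2t/k)/f(x, s²)`. -/
theorem posterior_mgf_V (k : ℝ) (hk : 0 < k) (g : ℝ → ℝ → ℝ)
    (hg : ∀ θ σ2, 0 ≤ g θ σ2)
    (hgint : ∫ θ : ℝ, ∫ σ2 in Set.Ioi (0 : ℝ), g θ σ2 = 1)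
    (x s2 : ℝ) (hs2 : 0 < s2) (hf : 0 < marg k g x s2)
    (hint : ∀ t : ℝ, Integrable
      (fun p : ℝ × ℝ => Real.exp (t / p.2) * lik k x s2 p.1 p.2 * g p.1 p.2)
      ((volume : Measure ℝ).prod (volume.restrict (Set.Ioi 0)))) :
    ∀ t : ℝ, 0 < s2 - 2 * t / k →
      postExp k g x s2 (fun _ σ2 => Real.exp (t / σ2)) =
        (s2 / (s2 - 2 * t / k)) ^ (k / 2 - 1) *
          marg k g x (s2 - 2 * t / k) / marg k g x s2 :=
  posterior_mgf_V_general k hk g x s2 hs2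
end
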